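/- Let g: {0,1}^n → {0,1}^m satisfy |Σ_a (δ^k_{g(a)} − 2^{−m})(−1)^{a·r}| ≤ n²(√2)^{n−m} for all k, r. Define ρ_{KE} = Σ_k Σ_a |k⟩⟨k| δ^k_{g(a)} tr_A[ρ_{AE} ∏_i A_i(a_i)] with binary projective measurements A_i(a) = (1/2)(1 + (−1)^a C_i). Then ‖ρ_{KE} − u_K ⊗ ρ_E‖₁ ≤ n²(√2)^{m−n} Σ_{r∈{0,1}^n} ‖tr_A(ρ_{AE} ∏_i C_i^{r_i})‖₁, where C_i⁰ = 1 and C_i¹ = C_i. -/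

import Mathlib

open Matrix ComplexOrder

/-- The trace norm `‖X‖₁ = tr √(Xᴴ X)` of a matrix. -/
noncomputable def traceNorm {n : Type*} [Fintype n] [DecidableEq n] (X : Matrix n n ℂ) : ℝ :=
  (((Matrix.posSemidef_conjTranspose_mul_self X).1.eigenvectorUnitary : Matrix n n ℂ) *
    diagonal (((↑) : ℝ → ℂ) ∘ Real.sqrt ∘ (Matrix.posSemidef_conjTranspose_mul_self X).1.eigenvalues) *
    (star (Matrix.posSemidef_conjTranspose_mul_self X).1.eigenvectorUnitary : Matrix n n ℂ)).trace.re

/-- Partial trace over the first tensor factor. -/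
noncomputable def ptraceLeft {α β : Type*} [Fintype α]
    (M : Matrix (α × β) (α × β) ℂ) : Matrix β β ℂ :=
  Matrix.of fun b b' => ∑ a, M (a, b) (a, b')

/-! Expanding each projector as `A_i(a) = (1 + (-1)^a C_i) / 2` turns `tr_A(ρ_AE ∏ᵢ A_i(a_i))`
into the Walsh series `2^{-n} Σ_r (-1)^{a·r} σ_r` in the operators `σ_r = tr_A(ρ_AE ∏ᵢ C_i^{r_i})`,
and `σ_0 = ρ_E`. Hence `ρ_KE - u_K ⊗ ρ_E` is block diagonal in `k`, its `k`-th block being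
`Σ_r ĉ_k(r) σ_r` with `ĉ_k(r) = 2^{-n} Σ_a (δ^k_{g(a)} - 2^{-m}) (-1)^{a·r}`, which the balancedness
promise bounds by `2^{-n} n² √2^{n-m}`. The trace norm of a block-diagonal matrix is at most the sum
over the `2^m` blocks, and the triangle inequality bounds each block; both follow from the
variational formula `‖Z‖₁ = max_{‖U‖ ≤ 1} Re tr (U Z)`. -/

open scoped Matrix.Norms.L2Operator InnerProductSpace

section TraceNorm

variable {N : Type*} [Fintype N] [DecidableEq N]

lemma traceNorm_eq_sum_sqrt_eigenvalues (X : Matrix N N ℂ) :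
    traceNorm X = ∑ i, √((posSemidef_conjTranspose_mul_self X).1.eigenvalues i) := by
  rw [traceNorm, trace_mul_cycle, Unitary.coe_star_mul_self, one_mul, trace_diagonal]
  simp

lemma traceNorm_nonneg (X : Matrix N N ℂ) : 0 ≤ traceNorm X := by
  rw [traceNorm_eq_sum_sqrt_eigenvalues]
  positivity

lemma trace_eq_sum_inner (X : Matrix N N ℂ) (b : OrthonormalBasis N ℂ (EuclideanSpace ℂ N)) :
    X.trace = ∑ i, ⟪b i, WithLp.toLp 2 (X *ᵥ b i)⟫_ℂ := by
  rw [← trace_toLin_eq X (EuclideanSpace.basisFun N ℂ).toBasis,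
    ← toEuclideanLin_eq_toLin_orthonormal, LinearMap.trace_eq_sum_inner _ b]
  rfl

lemma norm_mulVec_eigenvectorBasis (M : Matrix N N ℂ) (i : N) :
    ‖WithLp.toLp 2 (M *ᵥ (posSemidef_conjTranspose_mul_self M).1.eigenvectorBasis i)‖ =
      √((posSemidef_conjTranspose_mul_self M).1.eigenvalues i) := by
  rw [(posSemidef_conjTranspose_mul_self M).1.eigenvalues_eq, ← mulVec_mulVec,
    dotProduct_mulVec, ← star_mulVec, dotProduct_comm, ← EuclideanSpace.inner_toLp_toLp,
    ← Real.sqrt_sq (norm_nonneg (WithLp.toLp 2 (M *ᵥ _))), ← inner_self_eq_norm_sq (𝕜 := ℂ)]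

lemma re_trace_mul_le (U M : Matrix N N ℂ) : (U * M).trace.re ≤ ‖U‖ * traceNorm M := by
  set b := (posSemidef_conjTranspose_mul_self M).1.eigenvectorBasis
  rw [trace_eq_sum_inner _ b, Complex.re_sum, traceNorm_eq_sum_sqrt_eigenvalues, Finset.mul_sum]
  refine Finset.sum_le_sum fun i _ => ?_
  calc (⟪b i, WithLp.toLp 2 ((U * M) *ᵥ b i)⟫_ℂ).re
      ≤ ‖b i‖ * ‖WithLp.toLp 2 (U *ᵥ (M *ᵥ b i))‖ := by
        rw [← mulVec_mulVec]
        exact (Complex.re_le_norm _).trans (norm_inner_le_norm _ _)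
    _ ≤ ‖U‖ * ‖WithLp.toLp 2 (M *ᵥ b i)‖ := by
        rw [b.orthonormal.1 i, one_mul]
        exact l2_opNorm_mulVec U (WithLp.toLp 2 (M *ᵥ b i))
    _ = _ := by rw [norm_mulVec_eigenvectorBasis]

lemma l2_opNorm_le_one_of_conjTranspose_mul_self_eq_diagonal {M : Type*} [Fintype M]
    (W : Matrix M N ℂ) (v : N → ℂ) (h : Wᴴ * W = diagonal v) (hv : ∀ i, ‖v i‖ ≤ 1) :
    ‖W‖ ≤ 1 := by
  have hW := l2_opNorm_conjTranspose_mul_self W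
  rw [h, l2_opNorm_diagonal] at hW
  have : ‖v‖ ≤ 1 := (pi_norm_le_iff_of_nonneg zero_le_one).2 hv
  nlinarith [norm_nonneg W]

/-- The witness is `U = V D Vᴴ Zᴴ`, where `Zᴴ Z = V Λ Vᴴ` and `D = Λ^{-1/2}` (with `0⁻¹ = 0`
on the kernel): the partial isometry in the polar decomposition of `Zᴴ`. -/
lemma exists_l2_opNorm_le_one_re_trace_mul_eq_traceNorm (Z : Matrix N N ℂ) :
    ∃ U : Matrix N N ℂ, ‖U‖ ≤ 1 ∧ (U * Z).trace.re = traceNorm Z := by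
  set hZ := posSemidef_conjTranspose_mul_self Z
  set hH := hZ.1
  set V : Matrix N N ℂ := (hH.eigenvectorUnitary : Matrix N N ℂ)
  set ev := hH.eigenvalues
  set D : Matrix N N ℂ := diagonal fun i => ((√(ev i))⁻¹ : ℝ)
  have hVV : Vᴴ * V = 1 := Unitary.coe_star_mul_self _
  have hdiag : Vᴴ * (Zᴴ * Z) * V = diagonal fun i => (ev i : ℂ) := by
    simpa [Unitary.conjStarAlgAut_star_apply, star_eq_conjTranspose, Function.comp_def] using
      hH.conjStarAlgAut_star_eigenvectorUnitary
  have hD : Dᴴ = D := by simp [D, diagonal_conjTranspose]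
  have hW : (Z * V * D)ᴴ * (Z * V * D) = diagonal fun i => ((ev i * (ev i)⁻¹ : ℝ) : ℂ) := by
    calc (Z * V * D)ᴴ * (Z * V * D) = D * (Vᴴ * (Zᴴ * Z) * V) * D := by
          simp only [conjTranspose_mul, hD, Matrix.mul_assoc]
      _ = _ := by
          rw [hdiag, diagonal_mul_diagonal, diagonal_mul_diagonal]
          congr 1; funext i
          have h := hZ.eigenvalues_nonneg i
          rw [← Complex.ofReal_mul, ← Complex.ofReal_mul, mul_comm, ← mul_assoc, ← mul_inv,
            Real.mul_self_sqrt h, mul_comm]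
  refine ⟨V * (Z * V * D)ᴴ, ?_, ?_⟩
  · calc ‖V * (Z * V * D)ᴴ‖ ≤ ‖V‖ * ‖Z * V * D‖ := by
          rw [← l2_opNorm_conjTranspose (Z * V * D)]
          exact l2_opNorm_mul _ _
      _ ≤ 1 * 1 := by
          gcongr
          · exact l2_opNorm_le_one_of_conjTranspose_mul_self_eq_diagonal V (fun _ => 1)
              (by rw [diagonal_one, hVV]) fun i => by simp
          · exact l2_opNorm_le_one_of_conjTranspose_mul_self_eq_diagonal _ _ hW fun i => by
              rcases eq_or_ne (ev i) 0 with h | h <;> simp [h]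
      _ = 1 := one_mul 1
  · calc (V * (Z * V * D)ᴴ * Z).trace.re = (D * (Vᴴ * (Zᴴ * Z) * V)).trace.re := by
          rw [conjTranspose_mul, conjTranspose_mul, hD, Matrix.mul_assoc, trace_mul_comm]
          simp only [Matrix.mul_assoc]
      _ = traceNorm Z := by
          rw [hdiag, diagonal_mul_diagonal, trace_diagonal, traceNorm_eq_sum_sqrt_eigenvalues,
            Complex.re_sum]
          refine Finset.sum_congr rfl fun i _ => ?_
          rw [← Complex.ofReal_mul, Complex.ofReal_re, ← div_eq_inv_mul, Real.div_sqrt]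

lemma traceNorm_sum_le {ι : Type*} (s : Finset ι) (M : ι → Matrix N N ℂ) :
    traceNorm (∑ j ∈ s, M j) ≤ ∑ j ∈ s, traceNorm (M j) := by
  obtain ⟨U, hU, hUM⟩ := exists_l2_opNorm_le_one_re_trace_mul_eq_traceNorm (∑ j ∈ s, M j)
  rw [← hUM, Matrix.mul_sum, trace_sum, Complex.re_sum]
  exact Finset.sum_le_sum fun j _ =>
    (re_trace_mul_le U (M j)).trans (mul_le_of_le_one_left (traceNorm_nonneg _) hU)

lemma traceNorm_smul_le (c : ℂ) (M : Matrix N N ℂ) : traceNorm (c • M) ≤ ‖c‖ * traceNorm M := by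
  obtain ⟨U, hU, hUM⟩ := exists_l2_opNorm_le_one_re_trace_mul_eq_traceNorm (c • M)
  rw [← hUM, Matrix.mul_smul, ← Matrix.smul_mul]
  refine (re_trace_mul_le _ M).trans (mul_le_mul_of_nonneg_right ?_ (traceNorm_nonneg M))
  exact (norm_smul_le c U).trans (mul_le_of_le_one_right (norm_nonneg c) hU)

lemma traceNorm_sum_smul_le {ι : Type*} (s : Finset ι) (c : ι → ℝ) (M : ι → Matrix N N ℂ)
    {B : ℝ} (hc : ∀ j ∈ s, |c j| ≤ B) :
    traceNorm (∑ j ∈ s, c j • M j) ≤ B * ∑ j ∈ s, traceNorm (M j) := by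
  rw [Finset.mul_sum]
  refine (traceNorm_sum_le _ _).trans (Finset.sum_le_sum fun j hj => ?_)
  rw [← Complex.coe_smul]
  refine (traceNorm_smul_le _ _).trans (mul_le_mul_of_nonneg_right ?_ (traceNorm_nonneg _))
  rw [Complex.norm_real, Real.norm_eq_abs]
  exact hc j hj

lemma traceNorm_mul_mul_conjTranspose_le {M : Type*} [Fintype M] [DecidableEq M]
    (J : Matrix M N ℂ) (hJ : ‖J‖ ≤ 1) (σ : Matrix N N ℂ) :
    traceNorm (J * σ * Jᴴ) ≤ traceNorm σ := by
  obtain ⟨U, hU, hUM⟩ := exists_l2_opNorm_le_one_re_trace_mul_eq_traceNorm (J * σ * Jᴴ)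
  have hcycle : (U * (J * σ * Jᴴ)).trace = (Jᴴ * U * J * σ).trace := by
    rw [← Matrix.mul_assoc, trace_mul_comm, ← Matrix.mul_assoc, ← Matrix.mul_assoc]
  have hnorm : ‖Jᴴ * U * J‖ ≤ 1 := calc
    ‖Jᴴ * U * J‖ ≤ ‖Jᴴ‖ * ‖U‖ * ‖J‖ :=
      (l2_opNorm_mul _ _).trans (mul_le_mul_of_nonneg_right (l2_opNorm_mul _ _) (norm_nonneg _))
    _ ≤ 1 * 1 * 1 := by
      rw [l2_opNorm_conjTranspose]
      gcongr
    _ = 1 := by norm_num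
  rw [← hUM, hcycle]
  exact (re_trace_mul_le _ σ).trans (mul_le_of_le_one_left (traceNorm_nonneg σ) hnorm)

end TraceNorm

section BlockDiagonal
variable {K N : Type*} [DecidableEq K]

/-- `Matrix.blockDiagonal` with the block index in the first factor. -/
def blockDiagonalLeft (Δ : K → Matrix N N ℂ) : Matrix (K × N) (K × N) ℂ :=
  of fun p q => if p.1 = q.1 then Δ p.1 p.2 q.2 else 0

lemma cqState_sub_eq_blockDiagonalLeft {α : Type*} [Fintype α] (g : α → K)
    (M : α → Matrix N N ℂ) (c : ℝ) (ρ : Matrix N N ℂ) :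
    (of fun p q : K × N => ∑ a, (if p.1 = q.1 ∧ g a = p.1 then 1 else 0) * M a p.2 q.2) -
        (of fun p q : K × N => (if p.1 = q.1 then (c : ℂ) else 0) * ρ p.2 q.2) =
      blockDiagonalLeft fun k => ∑ a, (if g a = k then (1 : ℝ) else 0) • M a - c • ρ := by
  ext ⟨k, e⟩ ⟨k', e'⟩
  simp only [blockDiagonalLeft, of_apply, Matrix.sub_apply]
  rcases eq_or_ne k k' with rfl | h
  · simp only [if_true, true_and, Matrix.sum_apply, Matrix.smul_apply, Complex.real_smul,
      apply_ite Complex.ofReal, ite_mul, one_mul, zero_mul]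
    push_cast
    simp only [one_mul, zero_mul]
  · simp [h]

lemma traceNorm_blockDiagonalLeft_le [Fintype K] [Fintype N] [DecidableEq N]
    (Δ : K → Matrix N N ℂ) :
    traceNorm (blockDiagonalLeft Δ) ≤ ∑ k, traceNorm (Δ k) := by
  let J : K → Matrix (K × N) N ℂ := fun k => of fun p j => if p = (k, j) then 1 else 0
  have hJJ : ∀ k, (J k)ᴴ * J k = diagonal fun _ => 1 := fun k => by
    ext i j
    simp [J, mul_apply, diagonal, eq_comm]
  have hsum : blockDiagonalLeft Δ = ∑ k, J k * Δ k * (J k)ᴴ := by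
    ext ⟨k, i⟩ ⟨k', j⟩
    simp only [blockDiagonalLeft, J, of_apply, mul_apply, conjTranspose_apply, Matrix.sum_apply]
    rcases eq_or_ne k k' with rfl | h
    · simp [Prod.ext_iff, ite_and]
    · simp [h, h.symm, Prod.ext_iff, ite_and]
  rw [hsum]
  refine (traceNorm_sum_le _ _).trans (Finset.sum_le_sum fun k _ => ?_)
  exact traceNorm_mul_mul_conjTranspose_le _
    (l2_opNorm_le_one_of_conjTranspose_mul_self_eq_diagonal _ _ (hJJ k) fun _ => by simp) _

end BlockDiagonal

section PartialTrace
variable {α β : Type*} [Fintype α]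

lemma ptraceLeft_sum {ι : Type*} (s : Finset ι) (M : ι → Matrix (α × β) (α × β) ℂ) :
    ptraceLeft (∑ j ∈ s, M j) = ∑ j ∈ s, ptraceLeft (M j) := by
  ext b b'
  simp only [ptraceLeft, of_apply, Matrix.sum_apply]
  exact Finset.sum_comm

lemma ptraceLeft_smul {R : Type*} [DistribSMul R ℂ] (c : R) (M : Matrix (α × β) (α × β) ℂ) :
    ptraceLeft (c • M) = c • ptraceLeft M := by
  ext b b'
  simp [ptraceLeft, Finset.smul_sum]

end PartialTrace

section PiTensor
variable {ι : Type*} [Fintype ι] {κ : ι → Type*} {E : Type*} [DecidableEq E]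

/-- The observable `(⊗ᵢ Xᵢ) ⊗ 1_E`. -/
def piTensorOne (X : ∀ i, Matrix (κ i) (κ i) ℂ) : Matrix ((∀ i, κ i) × E) ((∀ i, κ i) × E) ℂ :=
  of fun p q => (∏ i, X i (p.1 i) (q.1 i)) * (if p.2 = q.2 then 1 else 0)

lemma piTensorOne_one [∀ i, DecidableEq (κ i)] :
    piTensorOne (E := E) (fun i => (1 : Matrix (κ i) (κ i) ℂ)) = 1 := by
  ext p q
  simp only [piTensorOne, of_apply, one_apply, Finset.prod_boole, Prod.ext_iff, funext_iff]
  by_cases h : ∀ i, p.1 i = q.1 i <;> simp [h]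

lemma piTensorOne_sum_smul [DecidableEq ι] {γ : Type*} [Fintype γ] (f : ι → γ → ℝ)
    (Y : ∀ i, γ → Matrix (κ i) (κ i) ℂ) :
    piTensorOne (E := E) (fun i => ∑ s, f i s • Y i s) =
      ∑ r : ι → γ, (∏ i, f i (r i)) • piTensorOne (fun i => Y i (r i)) := by
  ext p q
  simp only [piTensorOne, of_apply, Matrix.sum_apply, Matrix.smul_apply, Complex.real_smul,
    Fintype.prod_sum, Finset.sum_mul, Finset.prod_mul_distrib, Complex.ofReal_prod, mul_assoc]

end PiTensor

section Walsh
variable {n : ℕ}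

def walsh (a r : Fin n → Fin 2) : ℝ := (-1) ^ ∑ i, (a i : ℕ) * (r i : ℕ)

lemma walsh_eq_prod (a r : Fin n → Fin 2) : walsh a r = ∏ i, (-1 : ℝ) ^ ((a i : ℕ) * (r i : ℕ)) :=
  (Finset.prod_pow_eq_pow_sum _ _ _).symm

lemma sum_walsh (r : Fin n → Fin 2) : ∑ a, walsh a r = if r = 0 then 2 ^ n else 0 := by
  have hbit : ∀ i, ∑ b : Fin 2, (-1 : ℝ) ^ ((b : ℕ) * (r i : ℕ)) = if r i = 0 then 2 else 0 := by
    intro i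
    rcases Fin.exists_fin_two.1 ⟨r i, rfl⟩ with h | h <;> simp [h, Fin.sum_univ_two]
  simp_rw [walsh_eq_prod]
  rw [← Fintype.prod_sum (fun i (b : Fin 2) => (-1 : ℝ) ^ ((b : ℕ) * (r i : ℕ)))]
  simp_rw [hbit, Finset.prod_ite_zero, funext_iff]
  simp

lemma sum_smul_walsh_sub_smul {E : Type*} [AddCommGroup E] [Module ℝ E]
    (σ : (Fin n → Fin 2) → E) (w : (Fin n → Fin 2) → ℝ) (t : ℝ) :
    ∑ a, w a • ∑ r, ((2 : ℝ) ^ (-(n : ℤ)) * walsh a r) • σ r - t • σ 0 =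
      ∑ r, ((2 : ℝ) ^ (-(n : ℤ)) * ∑ a, (w a - t) * walsh a r) • σ r := by
  have hconst : ∑ r, ((2 : ℝ) ^ (-(n : ℤ)) * ∑ a, t * walsh a r) • σ r = t • σ 0 := by
    simp_rw [← Finset.mul_sum, sum_walsh]
    simp [_root_.zpow_neg, zpow_natCast, mul_left_comm]
  simp_rw [sub_mul, Finset.sum_sub_distrib, mul_sub, sub_smul, Finset.sum_sub_distrib, hconst,
    Finset.smul_sum, smul_smul, Finset.mul_sum]
  rw [Finset.sum_comm]
  simp_rw [Finset.sum_smul, mul_left_comm]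

end Walsh

/-- `A b = (1 + (-1)^b (A 0 - A 1)) / 2`, written as a sum over `s` so that a product of such
expansions can be multiplied out. -/
lemma eq_sum_smul_of_add_eq_one {R : Type*} [Ring R] [Module ℝ R] (A : Fin 2 → R)
    (h : A 0 + A 1 = 1) (b : Fin 2) :
    A b = ∑ s : Fin 2,
      (2⁻¹ * (-1) ^ ((b : ℕ) * (s : ℕ)) : ℝ) • (if s = 0 then 1 else A 0 - A 1) := by
  rw [← h]
  fin_cases b <;> simp [Fin.sum_univ_two] <;> module

lemma piTensorOne_eq_sum_walsh_smul {n : ℕ} {κ : Fin n → Type*} [∀ i, Fintype (κ i)]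
    [∀ i, DecidableEq (κ i)] {E : Type*} [DecidableEq E] (A : ∀ i, Fin 2 → Matrix (κ i) (κ i) ℂ)
    (hA : ∀ i, A i 0 + A i 1 = 1) (a : Fin n → Fin 2) :
    piTensorOne (E := E) (fun i => A i (a i)) =
      ∑ r, ((2 : ℝ) ^ (-(n : ℤ)) * walsh a r) •
        piTensorOne (fun i => if r i = 0 then 1 else A i 0 - A i 1) := by
  rw [show (fun i => A i (a i)) = _ from funext fun i => eq_sum_smul_of_add_eq_one _ (hA i) (a i),
    piTensorOne_sum_smul]
  congr! 2 with r
  rw [Finset.prod_mul_distrib, Finset.prod_const, Finset.card_univ, Fintype.card_fin,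
    walsh_eq_prod, inv_pow, _root_.zpow_neg, zpow_natCast]

lemma two_pow_mul_two_zpow_neg_mul_sqrt_two_zpow (n m : ℕ) :
    (2 : ℝ) ^ m * ((2 : ℝ) ^ (-(n : ℤ)) * √2 ^ ((n : ℤ) - m)) = √2 ^ ((m : ℤ) - n) := by
  have hsq : √2 ^ (2 : ℤ) = (2 : ℝ) := by norm_num
  have hs : (√2 : ℝ) ≠ 0 := by positivity
  have hm : (2 : ℝ) ^ m = √2 ^ (2 * (m : ℤ)) := by rw [_root_.zpow_mul, hsq, zpow_natCast]
  have hn : (2 : ℝ) ^ (-(n : ℤ)) = √2 ^ (2 * -(n : ℤ)) := by rw [_root_.zpow_mul, hsq]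
  rw [hm, hn, ← zpow_add₀ hs, ← zpow_add₀ hs]
  ring_nf

theorem mbit_extractor_error_bound_general {n m dE : ℕ} {d : Fin n → ℕ}
    (g : (Fin n → Fin 2) → (Fin m → Fin 2))
    (hg : ∀ (k : Fin m → Fin 2) (r : Fin n → Fin 2),
      |∑ a : Fin n → Fin 2,
          (((if g a = k then (1 : ℝ) else 0) - (2 : ℝ) ^ (-(m : ℤ))) *
            (-1 : ℝ) ^ (∑ i, (a i : ℕ) * (r i : ℕ)))| ≤
        (n : ℝ) ^ 2 * Real.sqrt 2 ^ ((n : ℤ) - m))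
    (A : ∀ i, Fin 2 → Matrix (Fin (d i)) (Fin (d i)) ℂ)
    (hsum : ∀ i, A i 0 + A i 1 = 1)
    (ρAE : Matrix ((∀ i, Fin (d i)) × Fin dE) ((∀ i, Fin (d i)) × Fin dE) ℂ) :
    let C : ∀ i, Matrix (Fin (d i)) (Fin (d i)) ℂ := fun i => A i 0 - A i 1
    let MA : (Fin n → Fin 2) → Matrix (Fin dE) (Fin dE) ℂ := fun a =>
      ptraceLeft (ρAE * Matrix.of fun p q : (∀ i, Fin (d i)) × Fin dE =>
        (∏ i, A i (a i) (p.1 i) (q.1 i)) * (if p.2 = q.2 then 1 else 0))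
    let ρKE : Matrix ((Fin m → Fin 2) × Fin dE) ((Fin m → Fin 2) × Fin dE) ℂ :=
      Matrix.of fun p q => ∑ a : Fin n → Fin 2,
        (if p.1 = q.1 ∧ g a = p.1 then 1 else 0) * MA a p.2 q.2
    let ρE : Matrix (Fin dE) (Fin dE) ℂ := ptraceLeft ρAE
    let uKρE : Matrix ((Fin m → Fin 2) × Fin dE) ((Fin m → Fin 2) × Fin dE) ℂ :=
      Matrix.of fun p q => (if p.1 = q.1 then ((2 : ℂ) ^ (-(m : ℤ))) else 0) * ρE p.2 q.2
    traceNorm (ρKE - uKρE) ≤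
      (n : ℝ) ^ 2 * Real.sqrt 2 ^ ((m : ℤ) - n) *
        ∑ r : Fin n → Fin 2,
          traceNorm (ptraceLeft (ρAE * Matrix.of fun p q : (∀ i, Fin (d i)) × Fin dE =>
            (∏ i, (if r i = 0 then (1 : Matrix (Fin (d i)) (Fin (d i)) ℂ) else C i)
                (p.1 i) (q.1 i)) * (if p.2 = q.2 then 1 else 0))) := by
  intro C MA ρKE ρE uKρE
  set σ : (Fin n → Fin 2) → Matrix (Fin dE) (Fin dE) ℂ := fun r =>
    ptraceLeft (ρAE * piTensorOne fun i => if r i = 0 then 1 else C i)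
  set coeff : (Fin m → Fin 2) → (Fin n → Fin 2) → ℝ := fun k r =>
    (2 : ℝ) ^ (-(n : ℤ)) * ∑ a, ((if g a = k then 1 else 0) - (2 : ℝ) ^ (-(m : ℤ))) * walsh a r
  have hMA : ∀ a, MA a = ∑ r, ((2 : ℝ) ^ (-(n : ℤ)) * walsh a r) • σ r := fun a => by
    change ptraceLeft (ρAE * piTensorOne fun i => A i (a i)) = _
    simp_rw [piTensorOne_eq_sum_walsh_smul A hsum a, Matrix.mul_sum, Matrix.mul_smul,
      ptraceLeft_sum, ptraceLeft_smul]
    rfl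
  have hρE : ρE = σ 0 := by
    change ptraceLeft ρAE =
      ptraceLeft (ρAE * piTensorOne fun i => if (0 : Fin 2) = 0 then 1 else C i)
    simp only [if_true, piTensorOne_one, Matrix.mul_one]
  have hblocks : ρKE - uKρE = blockDiagonalLeft fun k => ∑ r, coeff k r • σ r := by
    have h := cqState_sub_eq_blockDiagonalLeft g MA ((2 : ℝ) ^ (-(m : ℤ))) ρE
    push_cast at h
    refine h.trans ?_
    simp_rw [hMA, hρE, sum_smul_walsh_sub_smul]
    rfl
  have hcoeff : ∀ k r, |coeff k r| ≤ (2 : ℝ) ^ (-(n : ℤ)) * ((n : ℝ) ^ 2 * √2 ^ ((n : ℤ) - m)) :=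
    fun k r => by
      rw [abs_mul, abs_of_pos (by positivity)]
      exact mul_le_mul_of_nonneg_left (hg k r) (by positivity)
  calc traceNorm (ρKE - uKρE) ≤ ∑ k, traceNorm (∑ r, coeff k r • σ r) :=
        hblocks ▸ traceNorm_blockDiagonalLeft_le _
    _ ≤ ∑ _k : Fin m → Fin 2, (2 : ℝ) ^ (-(n : ℤ)) * ((n : ℝ) ^ 2 * √2 ^ ((n : ℤ) - m)) *
          ∑ r, traceNorm (σ r) :=
        Finset.sum_le_sum fun k _ => traceNorm_sum_smul_le _ _ _ fun r _ => hcoeff k r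
    _ = _ := by
        rw [Finset.sum_const, Finset.card_univ, Fintype.card_fun, Fintype.card_fin,
          Fintype.card_fin, nsmul_eq_mul, ← mul_assoc]
        show _ = _ * ∑ r, traceNorm (σ r)
        push_cast
        rw [← two_pow_mul_two_zpow_neg_mul_sqrt_two_zpow n m]
        ring

/-- Extractor error bound for an `m`-bit extractor function `g` with the balancedness
promise: `‖ρ_{KE} - u_K ⊗ ρ_E‖₁ ≤ n² √2^{m-n} Σ_r ‖tr_A (ρ_{AE} ∏ᵢ Cᵢ^{rᵢ})‖₁`. -/
theorem mbit_extractor_error_bound {n m dE : ℕ} {d : Fin n → ℕ}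
    (g : (Fin n → Fin 2) → (Fin m → Fin 2))
    (hg : ∀ (k : Fin m → Fin 2) (r : Fin n → Fin 2),
      |∑ a : Fin n → Fin 2,
          (((if g a = k then (1 : ℝ) else 0) - (2 : ℝ) ^ (-(m : ℤ))) *
            (-1 : ℝ) ^ (∑ i, (a i : ℕ) * (r i : ℕ)))| ≤
        (n : ℝ) ^ 2 * Real.sqrt 2 ^ ((n : ℤ) - m))
    (A : ∀ i, Fin 2 → Matrix (Fin (d i)) (Fin (d i)) ℂ)
    (hproj : ∀ i a, (A i a).IsHermitian ∧ A i a * A i a = A i a)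
    (hsum : ∀ i, A i 0 + A i 1 = 1)
    (ρAE : Matrix ((∀ i, Fin (d i)) × Fin dE) ((∀ i, Fin (d i)) × Fin dE) ℂ)
    (hρ : ρAE.PosSemidef) (htr : ρAE.trace = 1) :
    let C : ∀ i, Matrix (Fin (d i)) (Fin (d i)) ℂ := fun i => A i 0 - A i 1
    let MA : (Fin n → Fin 2) → Matrix (Fin dE) (Fin dE) ℂ := fun a =>
      ptraceLeft (ρAE * Matrix.of fun p q : (∀ i, Fin (d i)) × Fin dE =>
        (∏ i, A i (a i) (p.1 i) (q.1 i)) * (if p.2 = q.2 then 1 else 0))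
    let ρKE : Matrix ((Fin m → Fin 2) × Fin dE) ((Fin m → Fin 2) × Fin dE) ℂ :=
      Matrix.of fun p q => ∑ a : Fin n → Fin 2,
        (if p.1 = q.1 ∧ g a = p.1 then 1 else 0) * MA a p.2 q.2
    let ρE : Matrix (Fin dE) (Fin dE) ℂ := ptraceLeft ρAE
    let uKρE : Matrix ((Fin m → Fin 2) × Fin dE) ((Fin m → Fin 2) × Fin dE) ℂ :=
      Matrix.of fun p q => (if p.1 = q.1 then ((2 : ℂ) ^ (-(m : ℤ))) else 0) * ρE p.2 q.2
    traceNorm (ρKE - uKρE) ≤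
      (n : ℝ) ^ 2 * Real.sqrt 2 ^ ((m : ℤ) - n) *
        ∑ r : Fin n → Fin 2,
          traceNorm (ptraceLeft (ρAE * Matrix.of fun p q : (∀ i, Fin (d i)) × Fin dE =>
            (∏ i, (if r i = 0 then (1 : Matrix (Fin (d i)) (Fin (d i)) ℂ) else C i)
                (p.1 i) (q.1 i)) * (if p.2 = q.2 then 1 else 0))) :=
  mbit_extractor_error_bound_general g hg A hsum ρAE
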